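/- Let q ∈ (0,1), and let ŷ ∈ ℝ^n be any vector whose coordinates with index > k are all zero, where k ≤ n/2. Define ȳ* by ȳ*_i = q^i/(1−q). Then ‖ŷ − ȳ*‖ ≥ (q^k/√2)·‖ȳ*‖. -/
import Mathlib

theorem stmt_14 (n k : ℕ) (hk : 2 * k ≤ n) (q : ℝ) (hq0 : 0 < q) (hq1 : q < 1)
    (yhat ybar : EuclideanSpace ℝ (Fin n))
    (hyhat : ∀ i : Fin n, k < (i : ℕ) + 1 → yhat i = 0)
    (hybar : ∀ i : Fin n, ybar i = q ^ ((i : ℕ) + 1) / (1 - q)) :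
    q ^ k / Real.sqrt 2 * ‖ybar‖ ≤ ‖yhat - ybar‖ := by
  have hq1' : (0:ℝ) < 1 - q := by linarith
  have hkn : k ≤ n := by omega
  set r : ℝ := q ^ 2 with hr
  have hr0 : (0:ℝ) < r := by positivity
  have hr1 : r < 1 := by nlinarith
  -- norms squared
  have hnorm_sq : ∀ x : EuclideanSpace ℝ (Fin n), ‖x‖ ^ 2 = ∑ i, (x i) ^ 2 := by
    intro x
    rw [EuclideanSpace.norm_eq, Real.sq_sqrt (by positivity)]
    simp [Real.norm_eq_abs, sq_abs]
  -- ybar squared terms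
  have hybar_sq : ∀ i : Fin n, (ybar i) ^ 2 = r ^ ((i:ℕ)+1) / (1-q)^2 := by
    intro i
    rw [hybar i, div_pow, hr, ← pow_mul, ← pow_mul, mul_comm]
  have hS : ‖ybar‖ ^ 2 = (∑ i ∈ Finset.range n, r ^ (i+1)) / (1-q)^2 := by
    rw [hnorm_sq, Finset.sum_div]
    simp_rw [hybar_sq]
    exact Fin.sum_univ_eq_sum_range (fun i => r ^ (i+1) / (1-q)^2) n
  -- lower bound on the error norm
  have hT : ∑ i ∈ Finset.Ico k n, r ^ (i+1) / (1-q)^2 ≤ ‖yhat - ybar‖ ^ 2 := by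
    rw [hnorm_sq]
    have hset : Finset.Ico k n = (Finset.range n).filter (fun i => k ≤ i) := by
      ext i; simp; omega
    rw [hset, Finset.sum_filter,
        ← Fin.sum_univ_eq_sum_range (fun i => if k ≤ i then r ^ (i+1) / (1-q)^2 else 0) n]
    apply Finset.sum_le_sum
    intro i _
    by_cases h : k ≤ (i:ℕ)
    · simp only [h, if_true]
      rw [← hybar_sq i]
      have h0 : yhat i = 0 := hyhat i (by omega)
      have hsub : (yhat - ybar) i = yhat i - ybar i := rfl
      rw [hsub, h0, zero_sub, neg_sq]
    · simp only [h, if_false]; positivity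
  -- geometric sum comparison
  have hB : ∑ i ∈ Finset.range n, r ^ i ≤ 2 * ∑ i ∈ Finset.range (n-k), r ^ i := by
    have hsplit : ∑ i ∈ Finset.range (n-k), r ^ i + ∑ i ∈ Finset.Ico (n-k) n, r ^ i
        = ∑ i ∈ Finset.range n, r ^ i := by
      simp only [Finset.range_eq_Ico]
      exact Finset.sum_Ico_consecutive _ (Nat.zero_le (n-k)) (by omega)
    have htail : ∑ i ∈ Finset.Ico (n-k) n, r ^ i ≤ ∑ i ∈ Finset.range (n-k), r ^ i := by
      rw [Finset.sum_Ico_eq_sum_range]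
      calc ∑ i ∈ Finset.range (n - (n-k)), r ^ (n-k+i)
          ≤ ∑ i ∈ Finset.range (n - (n-k)), r ^ i :=
            Finset.sum_le_sum (fun i _ => pow_le_pow_of_le_one hr0.le hr1.le (by omega))
        _ ≤ ∑ i ∈ Finset.range (n-k), r ^ i :=
            Finset.sum_le_sum_of_subset_of_nonneg (Finset.range_subset_range.2 (by omega))
              (fun i _ _ => by positivity)
    linarith
  have hA : ∑ i ∈ Finset.range n, r ^ (i+1) ≤ 2 * ∑ i ∈ Finset.range (n-k), r ^ (i+1) := by
    simp_rw [pow_succ, ← Finset.sum_mul]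
    nlinarith [Finset.sum_nonneg (fun i (_ : i ∈ Finset.range (n-k)) => (pow_pos hr0 i).le)]
  have hIco : ∑ i ∈ Finset.Ico k n, r ^ (i+1)
      = r ^ k * ∑ i ∈ Finset.range (n-k), r ^ (i+1) := by
    rw [Finset.sum_Ico_eq_sum_range, Finset.mul_sum]
    exact Finset.sum_congr rfl (fun i _ => by rw [← pow_add]; congr 1)
  have hqk : (q ^ k) ^ 2 = r ^ k := by rw [hr, ← pow_mul, ← pow_mul, mul_comm]
  have key : (q ^ k / Real.sqrt 2 * ‖ybar‖) ^ 2 ≤ ‖yhat - ybar‖ ^ 2 := by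
    rw [← Finset.sum_div, hIco] at hT
    rw [mul_pow, div_pow, Real.sq_sqrt (by norm_num : (0:ℝ) ≤ 2), hqk, hS]
    refine le_trans ?_ hT
    rw [div_mul_div_comm,
        div_le_div_iff₀ (by positivity) (by positivity : (0:ℝ) < (1-q)^2)]
    nlinarith [mul_le_mul_of_nonneg_right
        (mul_le_mul_of_nonneg_left hA (pow_pos hr0 k).le)
        (by positivity : (0:ℝ) ≤ (1-q)^2)]
  have hpos : 0 ≤ q ^ k / Real.sqrt 2 * ‖ybar‖ := by positivity
  have := Real.sqrt_le_sqrt key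
  rwa [Real.sqrt_sq hpos, Real.sqrt_sq (norm_nonneg _)] at this
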